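/- arXiv:1801.05201 — 8 statements merged into one kernel-verified Lean document; each statement's English description precedes it below -/
import Mathlib

section
/- Let H be a complex Hilbert space with inner product ⟨·,·⟩ linear in the first and conjugate-linear in the second argument, let C : H → H be a bounded linear operator, σ > 0, and u ∈ H with ⟨C u, u⟩ ≠ 0. Suppose that for each p < 0 we are given: a complex number λ(p) with Re λ(p) < 0, a bounded linear operator A_p : H → H with A_p u = λ(p)·u and (A_p)* u = conj(λ(p))·u, and a bounded linear operator V_p : H → H satisfying the Lyapunov equation for (A_p, C, σ). Assume Re λ(p) → 0 as p → 0⁻. Then for every p < 0 one has Re λ(p)·⟨V_p u, u⟩ = −σ²·⟨C u, u⟩/2, and consequently |⟨V_p u, u⟩| → +∞ as p → 0⁻. -/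
open ContinuousLinearMap Filter Topology

/-- The paper's inner product `⟨x, y⟩` (linear in the first argument,
conjugate-linear in the second) equals Mathlib's `inner y x`. -/
local notation "⟪" x ", " y "⟫" => @inner ℂ _ _ x y

/-- `V` satisfies the Lyapunov equation for `(A, C, σ)`. -/
def LyapunovEq {H : Type*} [NormedAddCommGroup H] [InnerProductSpace ℂ H]
    [CompleteSpace H] (A C : H →L[ℂ] H) (σ : ℝ) (V : H →L[ℂ] H) : Prop :=
  ∀ g h : H, ⟪h, A (V g)⟫ + ⟪h, V (adjoint A g)⟫ = -(σ ^ 2 : ℂ) * ⟪h, C g⟫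

/-! Testing the Lyapunov equation against an eigenvector `u` of `A*` turns it into a scalar
equation: both terms on the left become multiples of `⟨V u, u⟩`, with factors `μ` and `conj μ`,
which add up to `2 Re μ`. Hence `Re μ · ⟨V u, u⟩` is the constant `-σ² ⟨C u, u⟩ / 2 ≠ 0`, and
`⟨V u, u⟩` must blow up as `Re μ → 0`. -/

theorem LyapunovEq.re_mul_inner_eq_of_adjoint_apply_eq {H : Type*} [NormedAddCommGroup H]
    [InnerProductSpace ℂ H] [CompleteSpace H] {A C V : H →L[ℂ] H} {σ : ℝ}
    (hV : LyapunovEq A C σ V) {u : H} {μ : ℂ} (hu : adjoint A u = (starRingEnd ℂ) μ • u) :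
    (μ.re : ℂ) * ⟪u, V u⟫ = -(σ ^ 2 : ℂ) * ⟪u, C u⟫ / 2 := by
  have hAV : ⟪u, A (V u)⟫ = μ * ⟪u, V u⟫ := by
    rw [← adjoint_inner_left, hu, inner_smul_left, Complex.conj_conj]
  have hVA : ⟪u, V (adjoint A u)⟫ = (starRingEnd ℂ) μ * ⟪u, V u⟫ := by
    rw [hu, map_smul, inner_smul_right]
  have h := hV u u
  rw [hAV, hVA] at h
  have hμ : μ + (starRingEnd ℂ) μ = 2 * (μ.re : ℂ) := by exact_mod_cast Complex.add_conj μ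
  linear_combination h / 2 - ⟪u, V u⟫ / 2 * hμ

theorem tendsto_norm_atTop_of_mul_eq_const {α 𝕜 : Type*} [NormedField 𝕜] {l : Filter α}
    {r f : α → 𝕜} {c : 𝕜} (hc : c ≠ 0) (hr : Tendsto r l (𝓝 0))
    (hrf : ∀ᶠ x in l, r x * f x = c) : Tendsto (fun x => ‖f x‖) l atTop := by
  have hr0 : ∀ᶠ x in l, r x ≠ 0 := hrf.mono fun x hx => left_ne_zero_of_mul (hx ▸ hc)
  have hr' : Tendsto r l (𝓝[≠] 0) := tendsto_nhdsWithin_iff.2 ⟨hr, hr0⟩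
  refine ((tendsto_norm_inv_nhdsNE_zero_atTop.comp hr').const_mul_atTop
    (norm_pos_iff.2 hc)).congr' ((hrf.and hr0).mono fun x ⟨hx, hx0⟩ => ?_)
  rw [Function.comp_apply, ← norm_mul, ← hx, mul_comm (r x), mul_inv_cancel_right₀ hx0]

theorem statement1_general {H : Type*} [NormedAddCommGroup H] [InnerProductSpace ℂ H]
    [CompleteSpace H] (C : H →L[ℂ] H) (σ : ℝ) (hσ : 0 < σ) (u : H)
    (hC : ⟪u, C u⟫ ≠ 0)
    (lam : ℝ → ℂ) (A V : ℝ → H →L[ℂ] H)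
    (hA' : ∀ p < (0 : ℝ), adjoint (A p) u = (starRingEnd ℂ) (lam p) • u)
    (hV : ∀ p < (0 : ℝ), LyapunovEq (A p) C σ (V p))
    (hlim : Tendsto (fun p => (lam p).re) (𝓝[<] (0 : ℝ)) (𝓝 0)) :
    (∀ p < (0 : ℝ), ((lam p).re : ℂ) * ⟪u, V p u⟫ = -(σ ^ 2 : ℂ) * ⟪u, C u⟫ / 2) ∧
      Tendsto (fun p => ‖⟪u, V p u⟫‖) (𝓝[<] (0 : ℝ)) atTop := by
  have hre_mul : ∀ p < (0 : ℝ), ((lam p).re : ℂ) * ⟪u, V p u⟫ = -(σ ^ 2 : ℂ) * ⟪u, C u⟫ / 2 :=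
    fun p hp => (hV p hp).re_mul_inner_eq_of_adjoint_apply_eq (hA' p hp)
  refine ⟨hre_mul, tendsto_norm_atTop_of_mul_eq_const ?_ ?_ (eventually_nhdsWithin_of_forall hre_mul)⟩
  · have hσ' : (σ ^ 2 : ℂ) ≠ 0 := by exact_mod_cast (pow_pos hσ 2).ne'
    exact div_ne_zero (mul_ne_zero (neg_ne_zero.2 hσ') hC) two_ne_zero
  · simpa using hlim.ofReal

theorem statement1 {H : Type*} [NormedAddCommGroup H] [InnerProductSpace ℂ H]
    [CompleteSpace H] (C : H →L[ℂ] H) (σ : ℝ) (hσ : 0 < σ) (u : H)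
    (hC : ⟪u, C u⟫ ≠ 0)
    (lam : ℝ → ℂ) (A V : ℝ → H →L[ℂ] H)
    (hre : ∀ p < (0 : ℝ), (lam p).re < 0)
    (hA : ∀ p < (0 : ℝ), A p u = lam p • u)
    (hA' : ∀ p < (0 : ℝ), adjoint (A p) u = (starRingEnd ℂ) (lam p) • u)
    (hV : ∀ p < (0 : ℝ), LyapunovEq (A p) C σ (V p))
    (hlim : Tendsto (fun p => (lam p).re) (𝓝[<] (0 : ℝ)) (𝓝 0)) :
    (∀ p < (0 : ℝ), ((lam p).re : ℂ) * ⟪u, V p u⟫ = -(σ ^ 2 : ℂ) * ⟪u, C u⟫ / 2) ∧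
      Tendsto (fun p => ‖⟪u, V p u⟫‖) (𝓝[<] (0 : ℝ)) atTop :=
  statement1_general C σ hσ u hC lam A V hA' hV hlim
end

section
/- Let H be a complex Hilbert space with inner product ⟨·,·⟩ linear in the first and conjugate-linear in the second argument. Let 𝒜, C : H → H be bounded linear operators with 𝒜 self-adjoint, let σ > 0, p < 0 be real, and set A := p·Id + 𝒜. Let u_k, u_j ∈ H and real numbers λ_k, λ_j ≤ 0 with 𝒜 u_k = λ_k·u_k and 𝒜 u_j = λ_j·u_j, and suppose V : H → H is a bounded linear operator satisfying the Lyapunov equation for (A, C, σ). Then ⟨V u_k, u_j⟩ = −σ²·⟨C u_k, u_j⟩/(2p + λ_k + λ_j). In particular, if λ_{k*} = 0 and 𝒜 u_{k*} = 0 for some unit vector u_{k*}, then p·⟨V u_{k*}, u_{k*}⟩ = −σ²·⟨C u_{k*}, u_{k*}⟩/2, so if ⟨C u_{k*}, u_{k*}⟩ ≠ 0 then |⟨V u_{k*}, u_{k*}⟩| → +∞ as p → 0⁻. -/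
/-!
Since `A = p • 1 + 𝓐` is self-adjoint, testing the Lyapunov equation against eigenvectors
`u, v` of `𝓐` (eigenvalues `l, m`) collapses it to the scalar identity
`(2p + l + m) ⟨V u, v⟩ = -σ² ⟨C u, v⟩`, whose factor is negative when `p < 0` and `l, m ≤ 0`.
For a kernel vector of `𝓐` the factor is `2p`, so `⟨V u, u⟩` blows up like `1 / |p|`.
-/

open ContinuousLinearMap Filter Topology

/-- The paper's inner product `⟨x, y⟩` (linear in the first argument,
conjugate-linear in the second) equals Mathlib's `inner y x`. -/
local notation "⟪" x ", " y "⟫" => @inner ℂ _ _ x y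

section Lyapunov

variable {H : Type*} [NormedAddCommGroup H] [InnerProductSpace ℂ H]

lemma IsSelfAdjoint.ofReal_smul_id_add [CompleteSpace H] {A : H →L[ℂ] H}
    (hA : IsSelfAdjoint A) (p : ℝ) :
    IsSelfAdjoint ((p : ℂ) • ContinuousLinearMap.id ℂ H + A) :=
  ((show IsSelfAdjoint (p : ℂ) from Complex.conj_ofReal p).smul
    (IsSelfAdjoint.one (H →L[ℂ] H))).add hA

lemma ofReal_smul_id_add_apply_of_eq_smul {A : H →L[ℂ] H} {u : H} {l : ℝ}
    (hu : A u = (l : ℂ) • u) (p : ℝ) :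
    ((p : ℂ) • ContinuousLinearMap.id ℂ H + A) u = ((p + l : ℝ) : ℂ) • u := by
  simp [hu, add_smul]

lemma LyapunovEq.eigenvalue_add_mul_inner [CompleteSpace H] {A C V : H →L[ℂ] H} {σ : ℝ}
    (hV : LyapunovEq A C σ V) (hA : IsSelfAdjoint A) {u v : H} {μ ν : ℝ}
    (hu : A u = (μ : ℂ) • u) (hv : A v = (ν : ℂ) • v) :
    ((μ + ν : ℝ) : ℂ) * ⟪v, V u⟫ = -(σ ^ 2 : ℂ) * ⟪v, C u⟫ := by
  have hAV : ⟪v, A (V u)⟫ = ν * ⟪v, V u⟫ := by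
    rw [← adjoint_inner_left, hA.adjoint_eq, hv, inner_smul_left, Complex.conj_ofReal]
  have hVA : ⟪v, V (adjoint A u)⟫ = μ * ⟪v, V u⟫ := by
    rw [hA.adjoint_eq, hu, map_smul, inner_smul_right]
  rw [← hV u v, hAV, hVA]
  push_cast
  ring

end Lyapunov

lemma tendsto_norm_nhdsLT_zero_atTop_of_mul_eq {f : ℝ → ℂ} {c : ℂ} (hc : c ≠ 0)
    (hf : ∀ p < (0 : ℝ), (p : ℂ) * f p = c) :
    Tendsto (fun p => ‖f p‖) (𝓝[<] (0 : ℝ)) atTop := by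
  have hinv : Tendsto (fun p : ℝ => ‖c‖ * (-p⁻¹)) (𝓝[<] 0) atTop :=
    (tendsto_neg_atBot_atTop.comp tendsto_inv_nhdsLT_zero).const_mul_atTop (norm_pos_iff.2 hc)
  refine hinv.congr' ?_
  filter_upwards [self_mem_nhdsWithin] with p (hp : p < 0)
  rw [← hf p hp, norm_mul, Complex.norm_real, Real.norm_of_nonpos hp.le]
  field_simp [hp.ne]

theorem statement2_general {H : Type*} [NormedAddCommGroup H] [InnerProductSpace ℂ H]
    [CompleteSpace H] (𝓐 C : H →L[ℂ] H) (h𝓐 : IsSelfAdjoint 𝓐)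
    (σ : ℝ) (hσ : 0 < σ)
    (V : ℝ → H →L[ℂ] H)
    (hV : ∀ p < (0 : ℝ),
      LyapunovEq ((p : ℂ) • ContinuousLinearMap.id ℂ H + 𝓐) C σ (V p))
    (uk uj : H) (lk lj : ℝ) (hlk : lk ≤ 0) (hlj : lj ≤ 0)
    (hk : 𝓐 uk = (lk : ℂ) • uk) (hj : 𝓐 uj = (lj : ℂ) • uj)
    (ustar : H) (hstar : 𝓐 ustar = 0) :
    (∀ p < (0 : ℝ), ⟪uj, V p uk⟫
        = -(σ ^ 2 : ℂ) * ⟪uj, C uk⟫ / (2 * (p : ℂ) + (lk : ℂ) + (lj : ℂ))) ∧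
    (∀ p < (0 : ℝ), (p : ℂ) * ⟪ustar, V p ustar⟫
        = -(σ ^ 2 : ℂ) * ⟪ustar, C ustar⟫ / 2) ∧
    (⟪ustar, C ustar⟫ ≠ 0 →
      Tendsto (fun p => ‖⟪ustar, V p ustar⟫‖) (𝓝[<] (0 : ℝ)) atTop) := by
  have key : ∀ p < (0 : ℝ), ∀ {u v : H} {l m : ℝ}, 𝓐 u = (l : ℂ) • u → 𝓐 v = (m : ℂ) • v →
      ((p + l + (p + m) : ℝ) : ℂ) * ⟪v, V p u⟫ = -(σ ^ 2 : ℂ) * ⟪v, C u⟫ :=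
    fun p hp _ _ _ _ hu hv => (hV p hp).eigenvalue_add_mul_inner (h𝓐.ofReal_smul_id_add p)
      (ofReal_smul_id_add_apply_of_eq_smul hu p) (ofReal_smul_id_add_apply_of_eq_smul hv p)
  have hstar₀ : 𝓐 ustar = ((0 : ℝ) : ℂ) • ustar := by simp [hstar]
  have hdiag : ∀ p < (0 : ℝ), (p : ℂ) * ⟪ustar, V p ustar⟫
      = -(σ ^ 2 : ℂ) * ⟪ustar, C ustar⟫ / 2 := fun p hp => by
    rw [eq_div_iff two_ne_zero, ← key p hp hstar₀ hstar₀]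
    push_cast
    ring
  refine ⟨fun p hp => ?_, hdiag, fun hc => ?_⟩
  · have hden : 2 * (p : ℂ) + lk + lj ≠ 0 := by
      exact_mod_cast (show 2 * p + lk + lj < 0 by linarith).ne
    rw [eq_div_iff hden, ← key p hp hk hj]
    push_cast
    ring
  · refine tendsto_norm_nhdsLT_zero_atTop_of_mul_eq ?_ hdiag
    have hσ₀ : (σ : ℂ) ≠ 0 := Complex.ofReal_ne_zero.2 hσ.ne'
    simp [hσ₀, hc]

theorem statement2 {H : Type*} [NormedAddCommGroup H] [InnerProductSpace ℂ H]
    [CompleteSpace H] (𝓐 C : H →L[ℂ] H) (h𝓐 : IsSelfAdjoint 𝓐)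
    (σ : ℝ) (hσ : 0 < σ)
    (V : ℝ → H →L[ℂ] H)
    (hV : ∀ p < (0 : ℝ),
      LyapunovEq ((p : ℂ) • ContinuousLinearMap.id ℂ H + 𝓐) C σ (V p))
    (uk uj : H) (lk lj : ℝ) (hlk : lk ≤ 0) (hlj : lj ≤ 0)
    (hk : 𝓐 uk = (lk : ℂ) • uk) (hj : 𝓐 uj = (lj : ℂ) • uj)
    (ustar : H) (hnorm : ‖ustar‖ = 1) (hstar : 𝓐 ustar = 0) :
    (∀ p < (0 : ℝ), ⟪uj, V p uk⟫
        = -(σ ^ 2 : ℂ) * ⟪uj, C uk⟫ / (2 * (p : ℂ) + (lk : ℂ) + (lj : ℂ))) ∧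
    (∀ p < (0 : ℝ), (p : ℂ) * ⟪ustar, V p ustar⟫
        = -(σ ^ 2 : ℂ) * ⟪ustar, C ustar⟫ / 2) ∧
    (⟪ustar, C ustar⟫ ≠ 0 →
      Tendsto (fun p => ‖⟪ustar, V p ustar⟫‖) (𝓝[<] (0 : ℝ)) atTop) :=
  statement2_general 𝓐 C h𝓐 σ hσ V hV uk uj lk lj hlk hlj hk hj ustar hstar
end

section
/- Let H be a complex Hilbert space with inner product ⟨·,·⟩ linear in the first and conjugate-linear in the second argument, let C : H → H be a bounded linear operator, σ > 0, λ* ∈ ℂ purely imaginary, and let u^0, u^1, …, u^M ∈ H with u^0 = 0. Suppose that for each p < 0 we are given: a complex number λ(p) with Re λ(p) < 0 and Re λ(p) → 0 as p → 0⁻; a bounded linear operator A_p : H → H satisfying A_p u^l = λ(p)·u^l + u^{l−1} and (A_p)* u^l = conj(λ(p))·u^l + u^{l−1} for 1 ≤ l ≤ M; and a bounded linear operator V_p : H → H satisfying the Lyapunov equation for (A_p, C, σ). Then for all 1 ≤ l, m ≤ M there exist constants K > 0 and δ > 0 such that |⟨V_p u^l, u^m⟩| ≤ K·|Re λ(p)|^{−(l+m−1)}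 for all p ∈ (−δ, 0). -/
open ContinuousLinearMap Filter Topology

/-- The paper's inner product `⟨x, y⟩` (linear in the first argument,
conjugate-linear in the second) equals Mathlib's `inner y x`. -/
local notation "⟪" x ", " y "⟫" => @inner ℂ _ _ x y

/-!
Testing the Lyapunov equation against two vectors `u^l`, `u^m` of a Jordan chain of `A*`
gives `2 Re λ ⟨V u^l, u^m⟩ = -σ² ⟨C u^l, u^m⟩ - ⟨V u^l, u^{m-1}⟩ - ⟨V u^{l-1}, u^m⟩`.
Dividing by `2 |Re λ|` and inducting on `l + m` (with `|Re λ| ≤ 1` near `p = 0`) each step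
costs one more factor `|Re λ|⁻¹`, starting from `⟨V u^l, u^0⟩ = ⟨V u^0, u^m⟩ = 0`.
-/

section Lyapunov

variable {H : Type*} [NormedAddCommGroup H] [InnerProductSpace ℂ H] [CompleteSpace H]
  {A C V : H →L[ℂ] H} {σ : ℝ} {μ : ℂ} {x x' y y' : H}

theorem LyapunovEq.two_mul_re_mul_inner_eq (hV : LyapunovEq A C σ V)
    (hx : adjoint A x = (starRingEnd ℂ) μ • x + x')
    (hy : adjoint A y = (starRingEnd ℂ) μ • y + y') :
    (2 * μ.re : ℂ) * ⟪y, V x⟫ = -(σ ^ 2 : ℂ) * ⟪y, C x⟫ - ⟪y', V x⟫ - ⟪y, V x'⟫ := by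
  have h := hV x y
  rw [← adjoint_inner_left, hx, hy, map_add, map_smul, inner_add_right, inner_smul_right,
    inner_add_left, inner_smul_left, Complex.conj_conj] at h
  have hre : μ + (starRingEnd ℂ) μ = 2 * (μ.re : ℂ) := by
    rw [Complex.add_conj]; push_cast; ring
  linear_combination h - ⟪y, V x⟫ * hre

theorem LyapunovEq.two_mul_abs_re_mul_norm_inner_le (hV : LyapunovEq A C σ V)
    (hx : adjoint A x = (starRingEnd ℂ) μ • x + x')
    (hy : adjoint A y = (starRingEnd ℂ) μ • y + y') :
    2 * |μ.re| * ‖⟪y, V x⟫‖ ≤ σ ^ 2 * ‖⟪y, C x⟫‖ + ‖⟪y', V x⟫‖ + ‖⟪y, V x'⟫‖ := by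
  have h := congrArg norm (hV.two_mul_re_mul_inner_eq hx hy)
  rw [norm_mul, norm_mul, Complex.norm_two, Complex.norm_real, Real.norm_eq_abs] at h
  have hC : ‖-(σ ^ 2 : ℂ) * ⟪y, C x⟫‖ = σ ^ 2 * ‖⟪y, C x⟫‖ := by
    rw [norm_mul, norm_neg, norm_pow, Complex.norm_real, Real.norm_eq_abs, sq_abs]
  rw [h, ← hC]
  exact (norm_sub_le _ _).trans (by gcongr; exact norm_sub_le _ _)

end Lyapunov

theorem le_mul_div_pow_of_two_mul_le {M : ℕ} {f : ℕ → ℕ → ℝ} {r D : ℝ}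
    (hr0 : 0 < r) (hr1 : r ≤ 1) (hD : 0 ≤ D)
    (hf_zero_left : ∀ m, f 0 m = 0) (hf_zero_right : ∀ l, f l 0 = 0)
    (hrec : ∀ l m, l < M → m < M → 2 * r * f (l + 1) (m + 1) ≤ D + f (l + 1) m + f l (m + 1)) :
    ∀ l m, l ≤ M → m ≤ M → f l m ≤ (l + m) * D / r ^ (l + m - 1) := by
  intro l
  induction l with
  | zero => intro m _ _; rw [hf_zero_left]; positivity
  | succ l ihl =>
    intro m
    induction m with
    | zero => intro _ _; rw [hf_zero_right]; positivity
    | succ m ihm =>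
      intro hl hm
      have ht : 0 < r ^ (l + m) := pow_pos hr0 _
      have h1 : f (l + 1) m ≤ (l + m + 1) * D / r ^ (l + m) := by
        have h := ihm hl (by omega)
        rw [show l + 1 + m - 1 = l + m by omega] at h
        convert h using 3; push_cast; ring
      have h2 : f l (m + 1) ≤ (l + m + 1) * D / r ^ (l + m) := by
        have h := ihl (m + 1) (by omega) hm
        rw [show l + (m + 1) - 1 = l + m by omega] at h
        convert h using 3; push_cast; ring
      have hD' : D ≤ D / r ^ (l + m) := le_div_self hD ht (pow_le_one₀ hr0.le hr1)
      have hstep : 2 * r * f (l + 1) (m + 1) ≤ 2 * ((l + m + 2) * D / r ^ (l + m)) := by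
        calc 2 * r * f (l + 1) (m + 1) ≤ D + f (l + 1) m + f l (m + 1) := hrec l m hl hm
          _ ≤ D / r ^ (l + m) + 2 * ((l + m + 1) * D / r ^ (l + m)) := by linarith
          _ ≤ 2 * ((l + m + 2) * D / r ^ (l + m)) := by
            rw [← sub_nonneg]; ring_nf; positivity
      have hcoe : ((l + 1 : ℕ) : ℝ) + ((m + 1 : ℕ) : ℝ) = l + m + 2 := by push_cast; ring
      rw [hcoe, show l + 1 + (m + 1) - 1 = l + m + 1 by omega, pow_succ, ← div_div,
        le_div_iff₀ hr0]
      linarith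

theorem exists_pos_bound_on_grid (M : ℕ) (g : ℕ → ℕ → ℝ) :
    ∃ D > 0, ∀ l ≤ M, ∀ m ≤ M, g l m ≤ D := by
  obtain ⟨D, hD⟩ :=
    (((Set.finite_Iic M).prod (Set.finite_Iic M)).image fun q => g q.1 q.2).bddAbove
  exact ⟨max D 1, by positivity, fun l hl m hm => (hD ⟨(l, m), ⟨hl, hm⟩, rfl⟩).trans
    (le_max_left _ _)⟩

theorem exists_forall_Ioo_of_eventually_nhdsLT {P : ℝ → Prop} (h : ∀ᶠ p in 𝓝[<] 0, P p) :
    ∃ δ > 0, ∀ p, -δ < p → p < 0 → P p := by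
  obtain ⟨a, ha, hsub⟩ := mem_nhdsLT_iff_exists_Ioo_subset.mp h
  exact ⟨-a, neg_pos.mpr ha, fun p hp hp0 => hsub ⟨by simpa using hp, hp0⟩⟩

theorem statement4_general {H : Type*} [NormedAddCommGroup H] [InnerProductSpace ℂ H]
    [CompleteSpace H] (C : H →L[ℂ] H) (σ : ℝ)
    (M : ℕ) (u : ℕ → H) (h0 : u 0 = 0)
    (lam : ℝ → ℂ) (A V : ℝ → H →L[ℂ] H)
    (hre : ∀ p < (0 : ℝ), (lam p).re < 0)
    (hlim : Tendsto (fun p => (lam p).re) (𝓝[<] (0 : ℝ)) (𝓝 0))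
    (hA' : ∀ p < (0 : ℝ), ∀ l, 1 ≤ l → l ≤ M →
      adjoint (A p) (u l) = (starRingEnd ℂ) (lam p) • u l + u (l - 1))
    (hV : ∀ p < (0 : ℝ), LyapunovEq (A p) C σ (V p)) :
    ∀ l m, 1 ≤ l → l ≤ M → 1 ≤ m → m ≤ M →
      ∃ K > (0 : ℝ), ∃ δ > (0 : ℝ), ∀ p, -δ < p → p < 0 →
        ‖⟪u m, V p (u l)⟫‖ ≤ K / |(lam p).re| ^ (l + m - 1) := by
  intro l m hl hlM _ hmM
  obtain ⟨D, hD, hCD⟩ := exists_pos_bound_on_grid M fun l m => σ ^ 2 * ‖⟪u m, C (u l)⟫‖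
  obtain ⟨δ, hδ, hre_gt⟩ :=
    exists_forall_Ioo_of_eventually_nhdsLT (hlim.eventually (lt_mem_nhds neg_one_lt_zero))
  refine ⟨(l + m) * D, by positivity, δ, hδ, fun p hp hp0 => ?_⟩
  have hneg : (lam p).re < 0 := hre p hp0
  have hchain : ∀ k < M,
      adjoint (A p) (u (k + 1)) = (starRingEnd ℂ) (lam p) • u (k + 1) + u k := fun k hk => by
    simpa using hA' p hp0 (k + 1) (by omega) hk
  refine le_mul_div_pow_of_two_mul_le (f := fun l m => ‖⟪u m, V p (u l)⟫‖)
    (abs_pos.2 hneg.ne) (by linarith [abs_of_neg hneg, hre_gt p hp hp0]) hD.le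
    (by simp [h0]) (by simp [h0]) (fun i j hi hj => ?_) l m hlM hmM
  exact ((hV p hp0).two_mul_abs_re_mul_norm_inner_le (hchain i hi) (hchain j hj)).trans
    (by gcongr; exact hCD (i + 1) hi (j + 1) hj)

theorem statement4 {H : Type*} [NormedAddCommGroup H] [InnerProductSpace ℂ H]
    [CompleteSpace H] (C : H →L[ℂ] H) (σ : ℝ) (hσ : 0 < σ)
    (lamstar : ℂ) (hlamstar : lamstar.re = 0)
    (M : ℕ) (u : ℕ → H) (h0 : u 0 = 0)
    (lam : ℝ → ℂ) (A V : ℝ → H →L[ℂ] H)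
    (hre : ∀ p < (0 : ℝ), (lam p).re < 0)
    (hlim : Tendsto (fun p => (lam p).re) (𝓝[<] (0 : ℝ)) (𝓝 0))
    (hA : ∀ p < (0 : ℝ), ∀ l, 1 ≤ l → l ≤ M →
      A p (u l) = lam p • u l + u (l - 1))
    (hA' : ∀ p < (0 : ℝ), ∀ l, 1 ≤ l → l ≤ M →
      adjoint (A p) (u l) = (starRingEnd ℂ) (lam p) • u l + u (l - 1))
    (hV : ∀ p < (0 : ℝ), LyapunovEq (A p) C σ (V p)) :
    ∀ l m, 1 ≤ l → l ≤ M → 1 ≤ m → m ≤ M →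
      ∃ K > (0 : ℝ), ∃ δ > (0 : ℝ), ∀ p, -δ < p → p < 0 →
        ‖⟪u m, V p (u l)⟫‖ ≤ K / |(lam p).re| ^ (l + m - 1) :=
  statement4_general C σ M u h0 lam A V hre hlim hA' hV
end

section
/- Let H be a complex Hilbert space with inner product ⟨·,·⟩ linear in the first and conjugate-linear in the second argument, let C : H → H be a bounded linear operator, and u ∈ H. Suppose that for each p < 0 we are given: a real number σ(p) > 0, a complex number λ(p) with Re λ(p) < 0, a bounded linear operator A_p : H → H with A_p u = λ(p)·u and (A_p)* u = conj(λ(p))·u, and a bounded linear operator V_p : H → H satisfying the Lyapunov equation for (A_p, C, σ(p)). Then for each p < 0, ⟨V_p u, u⟩ = −σ(p)²·⟨C u, u⟩/(2·Re λ(p)). Consequently, if the limit Ξ := lim_{p→0⁻} σ(p)²/(−2·Re λ(p)) exists in ℝ, then lim_{p→0⁻} ⟨V_p u, u⟩ = Ξ·⟨C u, u⟩. -/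
open ContinuousLinearMap Filter Topology

/-- The paper's inner product `⟨x, y⟩` (linear in the first argument,
conjugate-linear in the second) equals Mathlib's `inner y x`. -/
local notation "⟪" x ", " y "⟫" => @inner ℂ _ _ x y

/-
Pairing the Lyapunov equation with an eigenvector `u` of `A*` (eigenvalue `conj λ`) on both
sides turns `⟨A V u, u⟩ + ⟨V A* u, u⟩` into `(λ + conj λ) ⟨V u, u⟩ = 2 Re λ · ⟨V u, u⟩`, so
`⟨V u, u⟩` is read off whenever `Re λ ≠ 0`; the limit statement is then continuity of
multiplication by `⟨C u, u⟩`.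
-/

section Lyapunov

variable {H : Type*} [NormedAddCommGroup H] [InnerProductSpace ℂ H] [CompleteSpace H]
  {A C V : H →L[ℂ] H} {σ : ℝ} {lam : ℂ} {u : H}

theorem LyapunovEq.two_re_mul_inner_of_adjoint_eigen (hV : LyapunovEq A C σ V)
    (hu : adjoint A u = (starRingEnd ℂ) lam • u) :
    2 * (lam.re : ℂ) * ⟪u, V u⟫ = -(σ ^ 2 : ℂ) * ⟪u, C u⟫ := by
  have hAV : ⟪u, A (V u)⟫ = lam * ⟪u, V u⟫ := by
    rw [← adjoint_inner_left, hu, inner_smul_left, Complex.conj_conj]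
  have hVA : ⟪u, V (adjoint A u)⟫ = (starRingEnd ℂ) lam * ⟪u, V u⟫ := by
    rw [hu, map_smul, inner_smul_right]
  have hsum : lam + (starRingEnd ℂ) lam = 2 * (lam.re : ℂ) := by
    rw [Complex.add_conj]; push_cast; ring
  rw [← hsum, ← hV u u, hAV, hVA]
  ring

theorem LyapunovEq.inner_of_adjoint_eigen (hV : LyapunovEq A C σ V)
    (hu : adjoint A u = (starRingEnd ℂ) lam • u) (hre : lam.re ≠ 0) :
    ⟪u, V u⟫ = -(σ ^ 2 : ℂ) * ⟪u, C u⟫ / (2 * (lam.re : ℂ)) := by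
  have hne : 2 * (lam.re : ℂ) ≠ 0 := mul_ne_zero two_ne_zero (Complex.ofReal_ne_zero.mpr hre)
  rw [eq_div_iff hne, mul_comm, hV.two_re_mul_inner_of_adjoint_eigen hu]

end Lyapunov

theorem statement5_general {H : Type*} [NormedAddCommGroup H] [InnerProductSpace ℂ H]
    [CompleteSpace H] (C : H →L[ℂ] H) (u : H)
    (σ : ℝ → ℝ) (lam : ℝ → ℂ) (A V : ℝ → H →L[ℂ] H)
    (hre : ∀ p < (0 : ℝ), (lam p).re < 0)
    (hA' : ∀ p < (0 : ℝ), adjoint (A p) u = (starRingEnd ℂ) (lam p) • u)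
    (hV : ∀ p < (0 : ℝ), LyapunovEq (A p) C (σ p) (V p)) :
    (∀ p < (0 : ℝ), ⟪u, V p u⟫
        = -((σ p) ^ 2 : ℂ) * ⟪u, C u⟫ / (2 * ((lam p).re : ℂ))) ∧
    ∀ Ξ : ℝ, Tendsto (fun p => (σ p) ^ 2 / (-2 * (lam p).re)) (𝓝[<] (0 : ℝ)) (𝓝 Ξ) →
      Tendsto (fun p => ⟪u, V p u⟫) (𝓝[<] (0 : ℝ)) (𝓝 ((Ξ : ℂ) * ⟪u, C u⟫)) := by
  have key (p : ℝ) (hp : p < 0) := (hV p hp).inner_of_adjoint_eigen (hA' p hp) (hre p hp).ne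
  refine ⟨key, fun Ξ hΞ => ?_⟩
  have hcoeff : ∀ᶠ p in 𝓝[<] (0 : ℝ),
      (((σ p) ^ 2 / (-2 * (lam p).re) : ℝ) : ℂ) * ⟪u, C u⟫ = ⟪u, V p u⟫ := by
    filter_upwards [self_mem_nhdsWithin] with p hp
    have hne : ((lam p).re : ℂ) ≠ 0 := Complex.ofReal_ne_zero.mpr (hre p hp).ne
    rw [key p hp]
    push_cast
    field_simp
  exact (((Complex.continuous_ofReal.tendsto Ξ).comp hΞ).mul_const _).congr' hcoeff

theorem statement5 {H : Type*} [NormedAddCommGroup H] [InnerProductSpace ℂ H]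
    [CompleteSpace H] (C : H →L[ℂ] H) (u : H)
    (σ : ℝ → ℝ) (lam : ℝ → ℂ) (A V : ℝ → H →L[ℂ] H)
    (hσ : ∀ p < (0 : ℝ), 0 < σ p)
    (hre : ∀ p < (0 : ℝ), (lam p).re < 0)
    (hA : ∀ p < (0 : ℝ), A p u = lam p • u)
    (hA' : ∀ p < (0 : ℝ), adjoint (A p) u = (starRingEnd ℂ) (lam p) • u)
    (hV : ∀ p < (0 : ℝ), LyapunovEq (A p) C (σ p) (V p)) :
    (∀ p < (0 : ℝ), ⟪u, V p u⟫
        = -((σ p) ^ 2 : ℂ) * ⟪u, C u⟫ / (2 * ((lam p).re : ℂ))) ∧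
    ∀ Ξ : ℝ, Tendsto (fun p => (σ p) ^ 2 / (-2 * (lam p).re)) (𝓝[<] (0 : ℝ)) (𝓝 Ξ) →
      Tendsto (fun p => ⟪u, V p u⟫) (𝓝[<] (0 : ℝ)) (𝓝 ((Ξ : ℂ) * ⟪u, C u⟫)) :=
  statement5_general C u σ lam A V hre hA' hV
end

section
/- Let (X, μ) be a σ-finite measure space with μ ≠ 0, and let f : X → ℝ be a measurable function that is essentially bounded above, with M := essSup_μ f ∈ ℝ, and such that μ({x : f(x) > M − ε}) > 0 for every ε > 0. For each real p < −M define N(p) := sup { ∫_X |h(x)|²/(4(p + f(x))²) dμ(x) : h ∈ L²(X, μ), ‖h‖_{L²} = 1 }. Then N(p) → +∞ as p → (−M)⁻. -/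
open MeasureTheory Filter Topology ENNReal

/-!
With `δ = -(p + M) > 0`, the weight `1 / (4 (p + f)²)` is a.e. at most `1 / (4 δ²)`, so the
supremum `N(p)` is finite. By σ-finiteness, `{f > M - δ}` contains a set `B` of finite positive
measure; on `B` one has `|p + f| < 2 δ` a.e., so the normalized indicator of `B` gives
`N(p) ≥ 1 / (16 δ²)`, which tends to `∞` as `p → -M`.
-/

section WeightedNorm

variable {X E : Type*} [MeasurableSpace X] {μ : Measure X} [NormedAddCommGroup E]

theorem Lp.integral_norm_sq_eq (h : Lp E 2 μ) : ∫ x, ‖h x‖ ^ 2 ∂μ = ‖h‖ ^ 2 := by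
  rw [Lp.norm_def, toReal_eLpNorm (Lp.aestronglyMeasurable h),
    lpNorm_eq_integral_norm_rpow_toReal two_ne_zero ofNat_ne_top (Lp.aestronglyMeasurable h)]
  simp only [toReal_ofNat, Real.rpow_two]
  rw [← Real.rpow_two, ← Real.rpow_mul (integral_nonneg fun x => by positivity)]
  norm_num

theorem Lp.exists_norm_eq_one_ae_eq_zero_of_notMem [NormedSpace ℝ E] [Nontrivial E]
    {p : ℝ≥0∞} (hp₀ : p ≠ 0) (hp : p ≠ ∞) {B : Set X} (hB : MeasurableSet B)
    (hB₀ : μ B ≠ 0) (hB_top : μ B ≠ ∞) :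
    ∃ h : Lp E p μ, ‖h‖ = 1 ∧ ∀ᵐ x ∂μ, x ∉ B → h x = 0 := by
  have hB_pos : 0 < μ.real B ^ (1 / p.toReal) :=
    Real.rpow_pos_of_pos (toReal_pos hB₀ hB_top) _
  obtain ⟨c, hc⟩ := exists_norm_eq E (inv_nonneg.2 hB_pos.le)
  refine ⟨indicatorConstLp p hB hB_top c, ?_, indicatorConstLp_coeFn_notMem⟩
  rw [norm_indicatorConstLp hp₀ hp, hc, inv_mul_cancel₀ hB_pos.ne']

variable {d : X → ℝ} {c : ℝ}

theorem Lp.integrable_norm_sq_div (hd : AEMeasurable d μ) (hc : 0 < c)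
    (hdc : ∀ᵐ x ∂μ, c ≤ d x) (h : Lp E 2 μ) : Integrable (fun x => ‖h x‖ ^ 2 / d x) μ := by
  refine ((Lp.memLp h).integrable_norm_pow two_ne_zero).div_const c |>.mono
    (((Lp.aestronglyMeasurable h).norm.aemeasurable.pow_const 2).div hd).aestronglyMeasurable ?_
  filter_upwards [hdc] with x hx
  have hdx : 0 < d x := hc.trans_le hx
  rw [Real.norm_of_nonneg (by positivity), Real.norm_of_nonneg (div_nonneg (by positivity) hc.le)]
  exact div_le_div_of_nonneg_left (by positivity) hc hx

theorem Lp.integral_norm_sq_div_le (hd : AEMeasurable d μ) (hc : 0 < c)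
    (hdc : ∀ᵐ x ∂μ, c ≤ d x) (h : Lp E 2 μ) : ∫ x, ‖h x‖ ^ 2 / d x ∂μ ≤ ‖h‖ ^ 2 / c := by
  calc ∫ x, ‖h x‖ ^ 2 / d x ∂μ ≤ ∫ x, ‖h x‖ ^ 2 / c ∂μ := by
        refine integral_mono_ae (Lp.integrable_norm_sq_div hd hc hdc h)
          (((Lp.memLp h).integrable_norm_pow two_ne_zero).div_const c) ?_
        filter_upwards [hdc] with x hx
        exact div_le_div_of_nonneg_left (by positivity) hc hx
    _ = ‖h‖ ^ 2 / c := by rw [integral_div, Lp.integral_norm_sq_eq]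

theorem Lp.div_le_integral_norm_sq_div (hd : AEMeasurable d μ) (hc : 0 < c)
    (hdc : ∀ᵐ x ∂μ, c ≤ d x) {B : Set X} {D : ℝ} (hdD : ∀ᵐ x ∂μ, x ∈ B → d x ≤ D) (h : Lp E 2 μ)
    (hh : ∀ᵐ x ∂μ, x ∉ B → h x = 0) : ‖h‖ ^ 2 / D ≤ ∫ x, ‖h x‖ ^ 2 / d x ∂μ := by
  rw [← Lp.integral_norm_sq_eq, ← integral_div]
  refine integral_mono_ae (((Lp.memLp h).integrable_norm_pow two_ne_zero).div_const D)
    (Lp.integrable_norm_sq_div hd hc hdc h) ?_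
  filter_upwards [hdc, hdD, hh] with x hcx hDx hx
  by_cases hxB : x ∈ B
  · exact div_le_div_of_nonneg_left (by positivity) (hc.trans_le hcx) (hDx hxB)
  · simp [hx hxB]

theorem div_le_sSup_integral_norm_sq_div [NormedSpace ℝ E] [Nontrivial E]
    (hd : AEMeasurable d μ) (hc : 0 < c) (hdc : ∀ᵐ x ∂μ, c ≤ d x) {B : Set X}
    (hB : MeasurableSet B) (hB₀ : μ B ≠ 0) (hB_top : μ B ≠ ∞) {D : ℝ}
    (hdD : ∀ᵐ x ∂μ, x ∈ B → d x ≤ D) :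
    1 / D ≤ sSup {s : ℝ | ∃ h : Lp E 2 μ, ‖h‖ = 1 ∧ s = ∫ x, ‖h x‖ ^ 2 / d x ∂μ} := by
  obtain ⟨h, h_norm, hh⟩ :=
    Lp.exists_norm_eq_one_ae_eq_zero_of_notMem (E := E) two_ne_zero ofNat_ne_top hB hB₀ hB_top
  have h_bdd : BddAbove {s : ℝ | ∃ h : Lp E 2 μ, ‖h‖ = 1 ∧ s = ∫ x, ‖h x‖ ^ 2 / d x ∂μ} := by
    refine ⟨1 / c, ?_⟩
    rintro s ⟨g, g_norm, rfl⟩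
    simpa [g_norm] using Lp.integral_norm_sq_div_le hd hc hdc g
  calc 1 / D = ‖h‖ ^ 2 / D := by rw [h_norm, one_pow]
    _ ≤ ∫ x, ‖h x‖ ^ 2 / d x ∂μ := Lp.div_le_integral_norm_sq_div hd hc hdc hdD h hh
    _ ≤ _ := le_csSup h_bdd ⟨h, h_norm, rfl⟩

end WeightedNorm

theorem one_div_le_sSup_integral_norm_sq_div_sq {X : Type*} [MeasurableSpace X]
    {μ : Measure X} [SigmaFinite μ] {f : X → ℝ} (hf : Measurable f) {M : ℝ}
    (hM : ∀ᵐ x ∂μ, f x ≤ M) (hpos : ∀ ε > (0 : ℝ), 0 < μ {x | M - ε < f x}) {p : ℝ}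
    (hp : p < -M) :
    1 / (16 * (p + M) ^ 2) ≤ sSup {s : ℝ | ∃ h : Lp ℂ 2 μ, ‖h‖ = 1 ∧
        s = ∫ x, ‖h x‖ ^ 2 / (4 * (p + f x) ^ 2) ∂μ} := by
  set δ := -(p + M) with hδ
  have hδ_pos : 0 < δ := by linarith
  obtain ⟨B, hB, hB_sub, hB₀, hB_top⟩ :=
    Measure.exists_subset_measure_lt_top (measurableSet_lt measurable_const hf) (hpos δ hδ_pos)
  have hdδ : ∀ᵐ x ∂μ, 4 * δ ^ 2 ≤ 4 * (p + f x) ^ 2 := by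
    filter_upwards [hM] with x hx
    nlinarith
  have hdB : ∀ᵐ x ∂μ, x ∈ B → 4 * (p + f x) ^ 2 ≤ 16 * (p + M) ^ 2 := by
    filter_upwards [hM] with x hx hxB
    have : M - δ < f x := hB_sub hxB
    nlinarith
  exact div_le_sSup_integral_norm_sq_div (((hf.const_add p).pow_const 2).const_mul 4).aemeasurable
    (by positivity) hdδ hB hB₀.ne' hB_top.ne hdB

theorem statement9_general {X : Type*} [MeasurableSpace X] (μ : Measure X)
    [SigmaFinite μ]
    (f : X → ℝ) (hf : Measurable f) (M : ℝ)
    (hM : ∀ᵐ x ∂μ, f x ≤ M)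
    (hpos : ∀ ε > (0 : ℝ), 0 < μ {x | M - ε < f x}) :
    Tendsto (fun p : ℝ => sSup {s : ℝ | ∃ h : Lp ℂ 2 μ, ‖h‖ = 1 ∧
        s = ∫ x, ‖h x‖ ^ 2 / (4 * (p + f x) ^ 2) ∂μ})
      (𝓝[<] (-M)) atTop := by
  have h_sq : Tendsto (fun p : ℝ => 16 * (p + M) ^ 2) (𝓝[<] (-M)) (𝓝[>] 0) := by
    refine tendsto_nhdsWithin_iff.2 ⟨?_, eventually_nhdsWithin_of_forall fun p hp => ?_⟩
    · exact tendsto_nhdsWithin_of_tendsto_nhds (by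
        simpa using ((continuous_add_const M).pow 2 |>.const_mul 16).tendsto (-M))
    · have : p + M < 0 := by linarith [Set.mem_Iio.1 hp]
      exact Set.mem_Ioi.2 (by nlinarith)
  refine tendsto_atTop_mono' _ ?_ (tendsto_inv_nhdsGT_zero.comp h_sq)
  filter_upwards [self_mem_nhdsWithin] with p hp
  rw [Function.comp_apply, inv_eq_one_div]
  exact one_div_le_sSup_integral_norm_sq_div_sq hf hM hpos hp

theorem statement9 {X : Type*} [MeasurableSpace X] (μ : Measure X)
    [SigmaFinite μ] (hμ : μ ≠ 0)
    (f : X → ℝ) (hf : Measurable f) (M : ℝ)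
    (hM : ∀ᵐ x ∂μ, f x ≤ M)
    (hMleast : ∀ M' : ℝ, (∀ᵐ x ∂μ, f x ≤ M') → M ≤ M')
    (hpos : ∀ ε > (0 : ℝ), 0 < μ {x | M - ε < f x}) :
    Tendsto (fun p : ℝ => sSup {s : ℝ | ∃ h : Lp ℂ 2 μ, ‖h‖ = 1 ∧
        s = ∫ x, ‖h x‖ ^ 2 / (4 * (p + f x) ^ 2) ∂μ})
      (𝓝[<] (-M)) atTop :=
  statement9_general μ f hf M hM hpos
end

section
/- Let H be a complex Hilbert space with inner product ⟨·,·⟩ linear in the first and conjugate-linear in the second argument. Let A, B : H → H be bounded linear operators, σ > 0 and p real, and let V : H → H be a bounded self-adjoint linear operator satisfying the Lyapunov equation for (p·Id + A, B, σ), i.e. ⟨(p·Id + A)(V g), h⟩ + ⟨V((p·Id + A*) g), h⟩ = −σ²·⟨B g, h⟩ for all g, h ∈ H. Let u ∈ H and λ ∈ ℂ with Re λ = 0, and set e' := A* u − conj(λ)·u. Then 2p·⟨V u, u⟩ = −σ²·⟨B u, u⟩ − 2·Re⟨V u, e'⟩. -/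
open ContinuousLinearMap Filter Topology

/-- The paper's inner product `⟨x, y⟩` (linear in the first argument,
conjugate-linear in the second) equals Mathlib's `inner y x`. -/
local notation "⟪" x ", " y "⟫" => @inner ℂ _ _ x y

theorem statement12 {H : Type*} [NormedAddCommGroup H] [InnerProductSpace ℂ H]
    [CompleteSpace H] (A B : H →L[ℂ] H) (σ p : ℝ) (hσ : 0 < σ)
    (V : H →L[ℂ] H) (hVsa : IsSelfAdjoint V)
    (hV : ∀ g h : H,
      ⟪h, ((p : ℂ) • ContinuousLinearMap.id ℂ H + A) (V g)⟫
        + ⟪h, V (((p : ℂ) • ContinuousLinearMap.id ℂ H + adjoint A) g)⟫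
        = -(σ ^ 2 : ℂ) * ⟪h, B g⟫)
    (u : H) (lam : ℂ) (hlam : lam.re = 0) :
    (2 * p : ℂ) * ⟪u, V u⟫
      = -(σ ^ 2 : ℂ) * ⟪u, B u⟫
        - 2 * (((⟪adjoint A u - (starRingEnd ℂ) lam • u, V u⟫ : ℂ).re : ℂ)) := by
  have hVadj : ContinuousLinearMap.adjoint V = V := hVsa
  set a : ℂ := ⟪u, V u⟫ with ha
  set c : ℂ := ⟪adjoint A u - (starRingEnd ℂ) lam • u, V u⟫ with hc
  -- a is real
  have hareal : (starRingEnd ℂ) a = a := by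
    rw [ha, inner_conj_symm, ← hVadj, adjoint_inner_left, hVadj]
  -- first term of key
  have h1 : (⟪u, A (V u)⟫ : ℂ) = c + lam * a := by
    rw [← adjoint_inner_left, hc]
    rw [inner_sub_left, inner_smul_left]
    simp [ha]
  -- second term
  have h2 : (⟪u, V (adjoint A u)⟫ : ℂ)
      = (starRingEnd ℂ) c + (starRingEnd ℂ) lam * a := by
    have : (⟪u, V (adjoint A u)⟫ : ℂ) = (starRingEnd ℂ) ⟪u, A (V u)⟫ := by
      rw [← inner_conj_symm, ← hVadj, adjoint_inner_left, hVadj,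
        ← adjoint_inner_left A]
    rw [this, h1, map_add, map_mul, hareal]
  have key := hV u u
  simp only [ContinuousLinearMap.add_apply, ContinuousLinearMap.smul_apply,
    ContinuousLinearMap.id_apply, map_add, map_smul, inner_add_right,
    inner_smul_right] at key
  rw [h1, h2, ← ha] at key
  have hcsum : c + (starRingEnd ℂ) c = 2 * ((c.re : ℝ) : ℂ) := by
    rw [Complex.add_conj]; push_cast; ring
  have hlsum : lam + (starRingEnd ℂ) lam = 0 := by
    rw [Complex.add_conj, hlam]; simp
  linear_combination key - a * hlsum - hcsum
end

section
/- Let H be a complex Hilbert space with inner product ⟨·,·⟩ linear in the first and conjugate-linear in the second argument. Let A, B : H → H be bounded linear operators, σ > 0, c > 0, C ≥ 0, η ≥ 0 real numbers, and p < 0. Let V : H → H be a bounded self-adjoint linear operator with ⟨V g, g⟩ ≥ 0 for all g ∈ H, satisfying the Lyapunov equation for (p·Id + A, B, σ). Let u ∈ H with ‖u‖ = 1, let λ ∈ ℂ with Re λ = 0, and set e' := A* u − conj(λ)·u. Assume Re⟨B u, u⟩ ≥ c, ‖V u‖ ≤ C and ‖e'‖ ≤ η. Then ⟨V u, u⟩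 ≥ (σ²·c − 2·C·η)/(2·|p|). -/
open ContinuousLinearMap Filter Topology

/-- The paper's inner product `⟨x, y⟩` (linear in the first argument,
conjugate-linear in the second) equals Mathlib's `inner y x`. -/
local notation "⟪" x ", " y "⟫" => @inner ℂ _ _ x y

theorem statement13 {H : Type*} [NormedAddCommGroup H] [InnerProductSpace ℂ H]
    [CompleteSpace H] (A B : H →L[ℂ] H) (σ c C η : ℝ)
    (hσ : 0 < σ) (hc : 0 < c) (hC : 0 ≤ C) (hη : 0 ≤ η) (p : ℝ) (hp : p < 0)
    (V : H →L[ℂ] H) (hVsa : IsSelfAdjoint V)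
    (hVpos : ∀ g : H, 0 ≤ (⟪g, V g⟫ : ℂ).re)
    (hV : LyapunovEq ((p : ℂ) • ContinuousLinearMap.id ℂ H + A) B σ V)
    (u : H) (hu : ‖u‖ = 1) (lam : ℂ) (hlam : lam.re = 0)
    (hB : c ≤ (⟪u, B u⟫ : ℂ).re)
    (hVu : ‖V u‖ ≤ C)
    (he : ‖adjoint A u - (starRingEnd ℂ) lam • u‖ ≤ η) :
    (σ ^ 2 * c - 2 * C * η) / (2 * |p|) ≤ (⟪u, V u⟫ : ℂ).re := by
  set e : H := adjoint A u - (starRingEnd ℂ) lam • u with he'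
  have hAu : adjoint A u = e + (starRingEnd ℂ) lam • u := by simp [he']
  have key := hV u u
  have hadj : adjoint ((p : ℂ) • ContinuousLinearMap.id ℂ H + A)
      = (p : ℂ) • ContinuousLinearMap.id ℂ H + adjoint A := by
    refine ((eq_adjoint_iff _ _).mpr ?_).symm
    intro x y
    simp only [add_apply, smul_apply, id_apply, inner_add_left, inner_add_right,
      inner_smul_left, inner_smul_right, Complex.conj_ofReal, adjoint_inner_left]
  rw [hadj] at key
  have h1 : ⟪u, A (V u)⟫ = ⟪e, V u⟫ + lam * ⟪u, V u⟫ := by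
    rw [← adjoint_inner_left, hAu]
    simp [inner_add_left, inner_smul_left]
  have hVe : ⟪u, V e⟫ = ⟪V u, e⟫ := by
    conv_rhs => rw [← hVsa.adjoint_eq]
    rw [adjoint_inner_left]
  have key2 : ((2 * p : ℝ) : ℂ) * ⟪u, V u⟫ + (lam + (starRingEnd ℂ) lam) * ⟪u, V u⟫
      + (⟪e, V u⟫ + ⟪V u, e⟫) = -(σ ^ 2 : ℂ) * ⟪u, B u⟫ := by
    have expand : ((p : ℂ) • ContinuousLinearMap.id ℂ H + A) (V u)
        = (p : ℂ) • (V u) + A (V u) := rfl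
    have expand2 : ((p : ℂ) • ContinuousLinearMap.id ℂ H + adjoint A) u
        = (p : ℂ) • u + adjoint A u := rfl
    rw [expand, expand2, hAu] at key
    simp only [inner_add_right, inner_smul_right, map_add, map_smul] at key
    rw [hVe] at key
    push_cast
    linear_combination key - h1
  have hre := congrArg Complex.re key2
  have hconj : ⟪V u, e⟫ = (starRingEnd ℂ) ⟪e, V u⟫ := (inner_conj_symm _ _).symm
  rw [hconj] at hre
  simp only [← Complex.ofReal_pow, Complex.add_re, Complex.mul_re, Complex.ofReal_re, Complex.ofReal_im,
    Complex.neg_re, Complex.neg_im, Complex.conj_re, Complex.conj_im, Complex.add_im,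
    Complex.neg_im] at hre
  -- hre should reduce using lam.re = 0
  have hbound : |(⟪e, V u⟫ : ℂ).re| ≤ η * C := by
    calc |(⟪e, V u⟫ : ℂ).re| ≤ ‖(⟪e, V u⟫ : ℂ)‖ := Complex.abs_re_le_norm _
      _ ≤ ‖e‖ * ‖V u‖ := norm_inner_le_norm _ _
      _ ≤ η * C := mul_le_mul he hVu (norm_nonneg _) hη
  have habs : |(⟪e, V u⟫ : ℂ).re| ≤ η * C := hbound
  have h3 : 2 * p * (⟪u, V u⟫ : ℂ).re + 2 * (⟪e, V u⟫ : ℂ).re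
      = -(σ ^ 2) * (⟪u, B u⟫ : ℂ).re := by
    rw [hlam] at hre
    nlinarith [hre]
  rw [abs_of_neg hp, div_le_iff₀ (by linarith : (0:ℝ) < 2 * (-p))]
  have h4 := abs_le.mp habs
  nlinarith [h4.1, h4.2, hB, sq_nonneg σ]
end

section
/- Let H be a nontrivial complex Hilbert space with inner product ⟨·,·⟩ linear in the first and conjugate-linear in the second argument. Let A : H → H be a bounded linear operator whose spectrum satisfies spec(A) = {λ*} ∪ S, where Re λ* = 0 and S ⊆ {z ∈ ℂ : Re z < 0}. Let B : H → H be a bounded self-adjoint operator and c > 0 with ⟨B g, g⟩ ≥ c·‖g‖² for all g ∈ H, and let σ > 0. Suppose that for each p < 0 there is a bounded self-adjoint linear operator V_p : H → H with ⟨V_p g, g⟩ ≥ 0 for all g ∈ H, satisfying the Lyapunov equation for (p·Id + A, B, σ). Then there exists a sequence (u_k)_{k ∈ ℕ} in H with ‖u_k‖ = 1 for all k such that for each k, ⟨V_p u_k, u_k⟩ → +∞ as p → 0⁻. -/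
/-!
By the Lyapunov equation, `⟨x, V p x⟩` decreases along the trajectory `exp (t (p + A)*) x` at
rate at least `σ² c ‖·‖²`; since it stays nonnegative, the trajectory comes arbitrarily close
to `0`. The difference `V q - V p` (`p ≤ q`) solves the Lyapunov equation for `p + A` with the
positive right-hand side `2 (q - p) V q`, so its form is nonincreasing along the same
trajectories and hence nonnegative: `p ↦ V p` is monotone in the Loewner order.
If every form `⟨x, V p x⟩` stayed bounded as `p → 0⁻`, Banach–Steinhaus would bound `‖V p‖`.
But `λ*` lies on the boundary of the spectrum, so `A*` has approximate eigenvectors `u` for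
`conj λ*`, and testing the Lyapunov equation on them gives
`σ² c ≤ 2 ‖V p‖ (|p| + ‖A* u - conj λ* u‖)`, so `‖V p‖` blows up. Hence some form is unbounded,
and by monotonicity it tends to `+∞`.
-/

open ContinuousLinearMap Filter Topology

/-- The paper's inner product `⟨x, y⟩` (linear in the first argument,
conjugate-linear in the second) equals Mathlib's `inner y x`. -/
local notation "⟪" x ", " y "⟫" => @inner ℂ _ _ x y

open NormedSpace Set
open scoped ComplexConjugate

theorem spectrum.inv_norm_units_inv_le_norm_sub {𝕜 A : Type*} [NormedField 𝕜] [NormedRing A]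
    [NormedAlgebra 𝕜 A] [NormOneClass A] [CompleteSpace A] {a : A} {z w : 𝕜}
    (hz : z ∈ spectrum 𝕜 a) (X : Aˣ) (hX : (X : A) = algebraMap 𝕜 A w - a) :
    ‖(↑X⁻¹ : A)‖⁻¹ ≤ ‖w - z‖ := by
  by_contra! h
  have hsmall : ‖algebraMap 𝕜 A (z - w)‖ < ‖(↑X⁻¹ : A)‖⁻¹ := by
    rwa [norm_algebraMap', norm_sub_rev]
  apply spectrum.mem_iff.mp hz
  convert (X.add _ hsmall).isUnit using 1
  rw [Units.val_add, hX, map_sub]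
  abel

theorem exists_norm_eq_one_norm_apply_lt {𝕜 E : Type*} [RCLike 𝕜] [NormedAddCommGroup E]
    [NormedSpace 𝕜 E] [Nontrivial E] (X : (E →L[𝕜] E)ˣ) :
    ∃ u : E, ‖u‖ = 1 ∧ ‖(X : E →L[𝕜] E) u‖ < 2 * ‖(↑X⁻¹ : E →L[𝕜] E)‖⁻¹ := by
  have hpos := Units.norm_pos X⁻¹
  obtain ⟨y, hy, hXy⟩ := exists_lt_apply_of_lt_opNorm (↑X⁻¹ : E →L[𝕜] E)
    (half_lt_self hpos)
  set v := (↑X⁻¹ : E →L[𝕜] E) y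
  have hv : 0 < ‖v‖ := (half_pos hpos).trans hXy
  have hXv : (X : E →L[𝕜] E) v = y := by
    change ((X : E →L[𝕜] E) * ↑X⁻¹) y = y
    rw [Units.mul_inv, one_apply_eq_self]
  refine ⟨(‖v‖⁻¹ : 𝕜) • v, norm_smul_inv_norm (norm_pos_iff.mp hv), ?_⟩
  rw [map_smul, hXv, norm_smul, norm_inv, norm_algebraMap', norm_norm]
  calc ‖v‖⁻¹ * ‖y‖ < (‖(↑X⁻¹ : E →L[𝕜] E)‖ / 2)⁻¹ * 1 := by gcongr
    _ = 2 * ‖(↑X⁻¹ : E →L[𝕜] E)‖⁻¹ := by field_simp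

theorem spectrum.exists_norm_eq_one_norm_sub_smul_le {𝕜 E : Type*} [RCLike 𝕜] [NormedAddCommGroup E]
    [NormedSpace 𝕜 E] [CompleteSpace E] [Nontrivial E] {T : E →L[𝕜] E} {z w : 𝕜}
    (hz : z ∈ spectrum 𝕜 T) (hw : w ∉ spectrum 𝕜 T) :
    ∃ u : E, ‖u‖ = 1 ∧ ‖T u - z • u‖ ≤ 3 * ‖w - z‖ := by
  obtain ⟨X, hX⟩ := spectrum.notMem_iff.mp hw
  obtain ⟨u, hu, hXu⟩ := exists_norm_eq_one_norm_apply_lt X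
  have hXu' : T u - z • u = (w - z) • u - (X : E →L[𝕜] E) u := by
    rw [hX, sub_apply, Algebra.algebraMap_eq_smul_one, smul_apply, one_apply_eq_self]
    module
  refine ⟨u, hu, ?_⟩
  calc ‖T u - z • u‖ ≤ ‖w - z‖ * ‖u‖ + ‖(X : E →L[𝕜] E) u‖ := by
        rw [hXu', ← norm_smul]; exact norm_sub_le _ _
    _ ≤ ‖w - z‖ + 2 * ‖w - z‖ := by
        rw [hu, mul_one]
        linarith [spectrum.inv_norm_units_inv_le_norm_sub hz X hX]
    _ = 3 * ‖w - z‖ := by ring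

theorem exists_norm_eq_one_norm_adjoint_sub_smul_le {H : Type*} [NormedAddCommGroup H]
    [InnerProductSpace ℂ H] [CompleteSpace H] [Nontrivial H] {A : H →L[ℂ] H} {μ : ℂ}
    (hμ : μ ∈ spectrum ℂ A) (hμ' : ∀ δ : ℝ, 0 < δ → μ + δ ∉ spectrum ℂ A)
    {ε : ℝ} (hε : 0 < ε) :
    ∃ u : H, ‖u‖ = 1 ∧ ‖adjoint A u - conj μ • u‖ ≤ ε := by
  have hspec : spectrum ℂ (adjoint A) = star (spectrum ℂ A) := spectrum.map_star A
  have hz : conj μ ∈ spectrum ℂ (adjoint A) := by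
    rwa [hspec, Set.mem_star, Complex.star_def, Complex.conj_conj]
  have hw : conj μ + (ε / 3 : ℝ) ∉ spectrum ℂ (adjoint A) := by
    rw [hspec, Set.mem_star, Complex.star_def, map_add, Complex.conj_conj, Complex.conj_ofReal]
    exact hμ' _ (by positivity)
  obtain ⟨u, hu, hAu⟩ := spectrum.exists_norm_eq_one_norm_sub_smul_le hz hw
  refine ⟨u, hu, hAu.trans_eq ?_⟩
  rw [add_sub_cancel_left, Complex.norm_real, Real.norm_of_nonneg (by positivity)]
  ring

section Lyapunov

variable {H : Type*} [NormedAddCommGroup H] [InnerProductSpace ℂ H] [CompleteSpace H]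

theorem hasDerivAt_exp_smul_apply (T : H →L[ℂ] H) (x : H) (t : ℝ) :
    HasDerivAt (fun s : ℝ => exp (s • T) x) (T (exp (t • T) x)) t :=
  ((apply ℂ H x).restrictScalars ℝ).hasFDerivAt.comp_hasDerivAt t
    (hasDerivAt_exp_smul_const' T t)

theorem IsSelfAdjoint.inner_apply_left {W : H →L[ℂ] H} (hW : IsSelfAdjoint W) (x y : H) :
    ⟪W x, y⟫ = ⟪x, W y⟫ :=
  hW.isSymmetric x y

theorem IsSelfAdjoint.ofReal_re_inner_apply_self {W : H →L[ℂ] H} (hW : IsSelfAdjoint W) (x : H) :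
    ((⟪x, W x⟫.re : ℝ) : ℂ) = ⟪x, W x⟫ :=
  Complex.conj_eq_iff_re.mp (by rw [inner_conj_symm, hW.inner_apply_left])

theorem IsSelfAdjoint.re_inner_apply_comm {W : H →L[ℂ] H} (hW : IsSelfAdjoint W) (x y : H) :
    ⟪y, W x⟫.re = ⟪x, W y⟫.re := by
  rw [← inner_conj_symm y, Complex.conj_re, hW.inner_apply_left]

theorem adjoint_ofReal_smul_id_add (A : H →L[ℂ] H) (r : ℝ) :
    adjoint ((r : ℂ) • ContinuousLinearMap.id ℂ H + A)
      = (r : ℂ) • ContinuousLinearMap.id ℂ H + adjoint A := by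
  rw [map_add, map_smulₛₗ, adjoint_id, Complex.conj_ofReal]

theorem isPositive_iff_isSelfAdjoint_and_re_inner_nonneg {W : H →L[ℂ] H} :
    W.IsPositive ↔ IsSelfAdjoint W ∧ ∀ x, 0 ≤ ⟪x, W x⟫.re := by
  simp only [isPositive_def', reApplyInnerSelf_apply, inner_re_symm (W _)]
  rfl

theorem exists_norm_le_of_forall_re_inner_le {ι : Type*} {V : ι → H →L[ℂ] H}
    (hV : ∀ i, 0 ≤ V i) (hbdd : ∀ x, ∃ C, ∀ i, ⟪x, V i x⟫.re ≤ C) : ∃ M, ∀ i, ‖V i‖ ≤ M := by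
  -- `⟪x, V i x⟫ = ‖√(V i) x‖ ^ 2`, so Banach–Steinhaus bounds the square roots
  have hsq : ∀ i x, ‖CFC.sqrt (V i) x‖ ^ 2 = ⟪x, V i x⟫.re := fun i x => by
    have hS := IsSelfAdjoint.of_nonneg (CFC.sqrt_nonneg (V i))
    conv_rhs => rw [← CFC.sqrt_mul_sqrt_self (V i) (hV i)]
    rw [mul_apply_eq_comp, ← hS.inner_apply_left]
    exact (inner_self_eq_norm_sq (𝕜 := ℂ) _).symm
  obtain ⟨M, hM⟩ := banach_steinhaus fun x => by
    obtain ⟨C, hC⟩ := hbdd x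
    exact ⟨√C, fun i => Real.le_sqrt_of_sq_le ((hsq i x).trans_le (hC i))⟩
  refine ⟨M * M, fun i => ?_⟩
  rw [← CFC.sqrt_mul_sqrt_self (V i) (hV i)]
  exact (norm_mul_le _ _).trans (mul_self_le_mul_self (norm_nonneg _) (hM i))

namespace LyapunovEq

variable {L C W : H →L[ℂ] H} {σ : ℝ}

theorem two_mul_re_inner_adjoint (hW : IsSelfAdjoint W) (h : LyapunovEq L C σ W) (x : H) :
    2 * ⟪x, W (adjoint L x)⟫.re = -(σ ^ 2) * ⟪x, C x⟫.re := by
  have hre := congrArg Complex.re (h x x)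
  rw [← adjoint_inner_left, Complex.add_re, hW.re_inner_apply_comm] at hre
  simpa [two_mul, ← Complex.ofReal_pow] using hre

theorem hasDerivAt_re_inner_exp (hW : IsSelfAdjoint W) (h : LyapunovEq L C σ W) (x : H) (t : ℝ) :
    HasDerivAt (fun s : ℝ => ⟪exp (s • adjoint L) x, W (exp (s • adjoint L) x)⟫.re)
      (-(σ ^ 2) * ⟪exp (t • adjoint L) x, C (exp (t • adjoint L) x)⟫.re) t := by
  set g := fun s : ℝ => exp (s • adjoint L) x
  have hg := hasDerivAt_exp_smul_apply (adjoint L) x t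
  have hWg : HasDerivAt (fun s => W (g s)) (W (adjoint L (g t))) t :=
    (W.restrictScalars ℝ).hasFDerivAt.comp_hasDerivAt t hg
  refine (Complex.reCLM.hasFDerivAt.comp_hasDerivAt t (hg.inner ℂ hWg)).congr_deriv ?_
  rw [← two_mul_re_inner_adjoint hW h, Complex.reCLM_apply, Complex.add_re, two_mul,
    hW.re_inner_apply_comm, add_comm]

theorem antitone_re_inner_exp (hW : IsSelfAdjoint W) (h : LyapunovEq L C σ W)
    (hC : C.IsPositive) (x : H) :
    Antitone fun t : ℝ => ⟪exp (t • adjoint L) x, W (exp (t • adjoint L) x)⟫.re :=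
  antitone_of_hasDerivAt_nonpos (hasDerivAt_re_inner_exp hW h x) fun _ =>
    mul_nonpos_of_nonpos_of_nonneg (neg_nonpos.mpr (sq_nonneg σ)) (hC.re_inner_nonneg_right _)

theorem zero_mem_closure_exp_adjoint {B V : H →L[ℂ] H} (hV : V.IsPositive)
    (h : LyapunovEq L B σ V) (hσ : σ ≠ 0) {c : ℝ} (hc : 0 < c)
    (hB : ∀ g, c * ‖g‖ ^ 2 ≤ ⟪g, B g⟫.re) (x : H) :
    (0 : H) ∈ closure ((fun t : ℝ => exp (t • adjoint L) x) '' Ici 0) := by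
  refine Metric.mem_closure_iff.mpr fun ε hε => ?_
  by_contra! hfar
  set g := fun t : ℝ => exp (t • adjoint L) x
  set φ := fun t : ℝ => ⟪g t, V (g t)⟫.re
  set κ := σ ^ 2 * c * ε ^ 2
  have hκ : 0 < κ := by positivity
  have hφ := hasDerivAt_re_inner_exp hV.isSelfAdjoint h x
  -- while the trajectory stays outside the `ε`-ball, `φ` decreases at rate at least `κ`
  have hanti : AntitoneOn (fun t => φ t + κ * t) (Ici 0) := by
    refine antitoneOn_of_hasDerivWithinAt_nonpos (convex_Ici 0)
      (f' := fun t => -(σ ^ 2) * ⟪g t, B (g t)⟫.re + κ * 1)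
      (fun t _ => ((hφ t).add ((hasDerivAt_id t).const_mul κ)).continuousAt.continuousWithinAt)
      (fun t _ => ((hφ t).add ((hasDerivAt_id t).const_mul κ)).hasDerivWithinAt) fun t ht => ?_
    have hgt : ε ≤ ‖g t‖ := by
      simpa using hfar (g t) (mem_image_of_mem g (interior_subset ht))
    have hcε : c * ε ^ 2 ≤ c * ‖g t‖ ^ 2 := by gcongr
    have hσB : σ ^ 2 * (c * ε ^ 2) ≤ σ ^ 2 * ⟪g t, B (g t)⟫.re := by
      gcongr; linarith [hB (g t)]
    simp only [κ]
    linarith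
  have hT : 0 ≤ φ 0 / κ + 1 :=
    add_nonneg (div_nonneg (hV.re_inner_nonneg_right _) hκ.le) zero_le_one
  have hdecr := hanti self_mem_Ici hT hT
  have hφT : 0 ≤ φ (φ 0 / κ + 1) := hV.re_inner_nonneg_right _
  simp only [mul_add, mul_div_cancel₀ _ hκ.ne', mul_zero, add_zero] at hdecr
  linarith

theorem isPositive_of_zero_mem_closure (hW : IsSelfAdjoint W) (h : LyapunovEq L C σ W)
    (hC : C.IsPositive)
    (hdecay : ∀ x, (0 : H) ∈ closure ((fun t : ℝ => exp (t • adjoint L) x) '' Ici 0)) :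
    W.IsPositive := by
  refine isPositive_iff_isSelfAdjoint_and_re_inner_nonneg.mpr ⟨hW, fun x => ?_⟩
  have hQ : Continuous fun y : H => ⟪y, W y⟫.re := by fun_prop
  have hsub : (fun t : ℝ => exp (t • adjoint L) x) '' Ici 0 ⊆ {y | ⟪y, W y⟫.re ≤ ⟪x, W x⟫.re} := by
    rintro _ ⟨t, ht, rfl⟩
    simpa using antitone_re_inner_exp hW h hC x ht
  simpa using (isClosed_le hQ continuous_const).closure_subset_iff.mpr hsub (hdecay x)

theorem sub_of_shift {A B Vp Vq : H →L[ℂ] H} {p q : ℝ}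
    (hp : LyapunovEq ((p : ℂ) • ContinuousLinearMap.id ℂ H + A) B σ Vp)
    (hq : LyapunovEq ((q : ℂ) • ContinuousLinearMap.id ℂ H + A) B σ Vq) (hpq : p ≤ q) :
    LyapunovEq ((p : ℂ) • ContinuousLinearMap.id ℂ H + A) Vq √(2 * (q - p)) (Vq - Vp) := by
  intro g h
  have hsq : ((√(2 * (q - p)) : ℝ) : ℂ) ^ 2 = 2 * (q - p) := by
    rw [← Complex.ofReal_pow, Real.sq_sqrt (by linarith)]; push_cast; ring
  have hp' := hp g h
  have hq' := hq g h
  rw [adjoint_ofReal_smul_id_add] at hp' hq' ⊢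
  simp only [hsq, add_apply, smul_apply, id_apply, sub_apply, map_add, map_smul, map_sub,
    inner_add_right, inner_smul_right, inner_sub_right] at hp' hq' ⊢
  linear_combination hq' - hp'

theorem le_of_shift_le {A B Vp Vq : H →L[ℂ] H} {p q c : ℝ}
    (hVp : Vp.IsPositive) (hVq : Vq.IsPositive)
    (hp : LyapunovEq ((p : ℂ) • ContinuousLinearMap.id ℂ H + A) B σ Vp)
    (hq : LyapunovEq ((q : ℂ) • ContinuousLinearMap.id ℂ H + A) B σ Vq) (hpq : p ≤ q)
    (hσ : σ ≠ 0) (hc : 0 < c) (hB : ∀ g, c * ‖g‖ ^ 2 ≤ ⟪g, B g⟫.re) : Vp ≤ Vq :=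
  (le_def _ _).mpr <| (hp.sub_of_shift hq hpq).isPositive_of_zero_mem_closure
    (hVq.isSelfAdjoint.sub hVp.isSelfAdjoint) hVq (hp.zero_mem_closure_exp_adjoint hVp hσ hc hB)

theorem re_inner_le_norm_mul {A B V : H →L[ℂ] H} {p : ℝ} {μ : ℂ} (hμ : μ.re = 0)
    (hV : IsSelfAdjoint V) (h : LyapunovEq ((p : ℂ) • ContinuousLinearMap.id ℂ H + A) B σ V)
    {u : H} (hu : ‖u‖ = 1) :
    σ ^ 2 * ⟪u, B u⟫.re ≤ 2 * ‖V‖ * (|p| + ‖adjoint A u - μ • u‖) := by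
  set r := adjoint A u - μ • u
  have hL : adjoint ((p : ℂ) • ContinuousLinearMap.id ℂ H + A) u = ((p : ℂ) + μ) • u + r := by
    simp only [adjoint_ofReal_smul_id_add, r, add_apply, smul_apply, id_apply]
    module
  have hbound : ∀ y, |⟪u, V y⟫.re| ≤ ‖V‖ * ‖y‖ := fun y =>
    (Complex.abs_re_le_norm _).trans <| (norm_inner_le_norm _ _).trans <| by
      rw [hu, one_mul]; exact V.le_opNorm y
  have hkey := h.two_mul_re_inner_adjoint hV u
  -- `⟪u, V u⟫` is real and `μ` is imaginary, so only `p` survives in the real part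
  rw [hL, map_add, map_smul, inner_add_right, inner_smul_right,
    ← hV.ofReal_re_inner_apply_self u, Complex.add_re, Complex.re_mul_ofReal, Complex.add_re,
    Complex.ofReal_re, hμ, add_zero] at hkey
  have hVu := hbound u
  rw [hu, mul_one] at hVu
  have hVr := hbound r
  calc σ ^ 2 * ⟪u, B u⟫.re = -(2 * (p * ⟪u, V u⟫.re)) - 2 * ⟪u, V r⟫.re := by linarith
    _ ≤ 2 * (|p| * |⟪u, V u⟫.re|) + 2 * |⟪u, V r⟫.re| := by
        rw [← abs_mul]
        linarith [neg_abs_le (p * ⟪u, V u⟫.re), neg_abs_le ⟪u, V r⟫.re]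
    _ ≤ 2 * (|p| * ‖V‖) + 2 * (‖V‖ * ‖r‖) := by gcongr
    _ = 2 * ‖V‖ * (|p| + ‖r‖) := by ring

theorem exists_lt_norm {A B : H →L[ℂ] H} {V : ℝ → H →L[ℂ] H} {c : ℝ} {μ : ℂ}
    (hμ : μ.re = 0) (happrox : ∀ ε > 0, ∃ u : H, ‖u‖ = 1 ∧ ‖adjoint A u - μ • u‖ ≤ ε)
    (hσ : σ ≠ 0) (hc : 0 < c) (hB : ∀ g, c * ‖g‖ ^ 2 ≤ ⟪g, B g⟫.re)
    (hVsa : ∀ p < (0 : ℝ), IsSelfAdjoint (V p))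
    (hV : ∀ p < (0 : ℝ), LyapunovEq ((p : ℂ) • ContinuousLinearMap.id ℂ H + A) B σ (V p))
    (M : ℝ) : ∃ p < 0, M < ‖V p‖ := by
  by_contra! hM
  set ε := σ ^ 2 * c / (8 * (|M| + 1))
  have hε : 0 < ε := by positivity
  obtain ⟨u, hu, hAu⟩ := happrox ε hε
  have hle :=
    (hV (-ε) (neg_neg_of_pos hε)).re_inner_le_norm_mul hμ (hVsa _ (neg_neg_of_pos hε)) hu
  have hBu : c ≤ ⟪u, B u⟫.re := by simpa [hu] using hB u
  have hMε : 4 * (|M| + 1) * ε = σ ^ 2 * c / 2 := by simp only [ε]; field_simp; ring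
  have hσc : 0 < σ ^ 2 * c := by positivity
  rw [abs_neg, abs_of_pos hε] at hle
  nlinarith [hM (-ε) (neg_neg_of_pos hε), norm_nonneg (V (-ε)), le_abs_self M]

theorem exists_forall_exists_lt_re_inner {A B : H →L[ℂ] H} {V : ℝ → H →L[ℂ] H} {c : ℝ} {μ : ℂ}
    (hμ : μ.re = 0) (happrox : ∀ ε > 0, ∃ u : H, ‖u‖ = 1 ∧ ‖adjoint A u - μ • u‖ ≤ ε)
    (hσ : σ ≠ 0) (hc : 0 < c) (hB : ∀ g, c * ‖g‖ ^ 2 ≤ ⟪g, B g⟫.re)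
    (hVpos : ∀ p < (0 : ℝ), (V p).IsPositive)
    (hV : ∀ p < (0 : ℝ), LyapunovEq ((p : ℂ) • ContinuousLinearMap.id ℂ H + A) B σ (V p)) :
    ∃ x : H, ∀ C, ∃ p < 0, C < ⟪x, V p x⟫.re := by
  by_contra! hbdd
  obtain ⟨M, hM⟩ := exists_norm_le_of_forall_re_inner_le (V := fun p : Iio (0 : ℝ) => V p)
    (fun p => (nonneg_iff_isPositive _).mpr (hVpos p p.2))
    (fun x => (hbdd x).imp fun C hC p => hC p p.2)
  obtain ⟨p, hp, hMp⟩ :=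
    exists_lt_norm hμ happrox hσ hc hB (fun p hp => (hVpos p hp).isSelfAdjoint) hV M
  exact (hM ⟨p, hp⟩).not_gt hMp

end LyapunovEq

end Lyapunov

theorem MonotoneOn.tendsto_atTop_nhdsLT {α β : Type*} [LinearOrder α] [TopologicalSpace α]
    [OrderTopology α] [Preorder β] {f : α → β} {a : α} (hf : MonotoneOn f (Iio a))
    (hunb : ∀ C, ∃ p < a, C < f p) : Tendsto f (𝓝[<] a) atTop :=
  tendsto_atTop.mpr fun C => by
    obtain ⟨p, hp, hCp⟩ := hunb C
    filter_upwards [Ioo_mem_nhdsLT hp] with q hq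
    exact hCp.le.trans (hf hp hq.2 hq.1.le)

theorem re_inner_smul_apply_smul {H : Type*} [NormedAddCommGroup H] [InnerProductSpace ℂ H]
    (W : H →L[ℂ] H) (a : ℝ) (x : H) :
    ⟪(a : ℂ) • x, W ((a : ℂ) • x)⟫.re = a ^ 2 * ⟪x, W x⟫.re := by
  rw [map_smul, inner_smul_left, inner_smul_right, Complex.conj_ofReal, ← mul_assoc,
    ← Complex.ofReal_mul, Complex.re_ofReal_mul, sq]

theorem statement14_general {H : Type*} [NormedAddCommGroup H] [InnerProductSpace ℂ H]
    [CompleteSpace H] [Nontrivial H] (A B : H →L[ℂ] H)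
    (lamstar : ℂ) (S : Set ℂ)
    (hspec : spectrum ℂ A = {lamstar} ∪ S)
    (hstar : lamstar.re = 0) (hS : S ⊆ {z : ℂ | z.re < 0})
    (c : ℝ) (hc : 0 < c)
    (hB : ∀ g : H, c * ‖g‖ ^ 2 ≤ (⟪g, B g⟫ : ℂ).re)
    (σ : ℝ) (hσ : 0 < σ)
    (V : ℝ → H →L[ℂ] H)
    (hVsa : ∀ p < (0 : ℝ), IsSelfAdjoint (V p))
    (hVpos : ∀ p < (0 : ℝ), ∀ g : H, 0 ≤ (⟪g, V p g⟫ : ℂ).re)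
    (hV : ∀ p < (0 : ℝ),
      LyapunovEq ((p : ℂ) • ContinuousLinearMap.id ℂ H + A) B σ (V p)) :
    ∃ u : ℕ → H, (∀ k, ‖u k‖ = 1) ∧
      ∀ k, Tendsto (fun p => (⟪u k, V p (u k)⟫ : ℂ).re) (𝓝[<] (0 : ℝ)) atTop := by
  have hVisPos : ∀ p < (0 : ℝ), (V p).IsPositive := fun p hp =>
    isPositive_iff_isSelfAdjoint_and_re_inner_nonneg.mpr ⟨hVsa p hp, hVpos p hp⟩
  have hgap : ∀ δ : ℝ, 0 < δ → lamstar + δ ∉ spectrum ℂ A := by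
    intro δ hδ hmem
    rcases hspec ▸ hmem with hmem | hmem
    · simpa [hstar, hδ.ne'] using congrArg Complex.re (mem_singleton_iff.mp hmem)
    · linarith [show δ < 0 by simpa [hstar] using hS hmem]
  obtain ⟨x, hx⟩ := LyapunovEq.exists_forall_exists_lt_re_inner (by rwa [Complex.conj_re])
    (fun ε hε => exists_norm_eq_one_norm_adjoint_sub_smul_le (hspec ▸ Or.inl rfl) hgap hε)
    hσ.ne' hc hB hVisPos hV
  have hx0 : x ≠ 0 := by
    rintro rfl
    obtain ⟨p, -, hp⟩ := hx 0
    simp at hp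
  have hmono : MonotoneOn (fun p => ⟪x, V p x⟫.re) (Iio 0) := fun p hp q hq hpq => by
    have hle := LyapunovEq.le_of_shift_le (hVisPos p hp) (hVisPos q hq) (hV p hp) (hV q hq) hpq
      hσ.ne' hc hB
    simpa [inner_sub_right] using ((le_def _ _).mp hle).re_inner_nonneg_right x
  refine ⟨fun _ => (‖x‖⁻¹ : ℂ) • x, fun _ => norm_smul_inv_norm hx0, fun _ => ?_⟩
  simp_rw [← Complex.ofReal_inv, re_inner_smul_apply_smul]
  exact (hmono.tendsto_atTop_nhdsLT hx).const_mul_atTop (by positivity)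

theorem statement14 {H : Type*} [NormedAddCommGroup H] [InnerProductSpace ℂ H]
    [CompleteSpace H] [Nontrivial H] (A B : H →L[ℂ] H)
    (lamstar : ℂ) (S : Set ℂ)
    (hspec : spectrum ℂ A = {lamstar} ∪ S)
    (hstar : lamstar.re = 0) (hS : S ⊆ {z : ℂ | z.re < 0})
    (hBsa : IsSelfAdjoint B) (c : ℝ) (hc : 0 < c)
    (hB : ∀ g : H, c * ‖g‖ ^ 2 ≤ (⟪g, B g⟫ : ℂ).re)
    (σ : ℝ) (hσ : 0 < σ)
    (V : ℝ → H →L[ℂ] H)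
    (hVsa : ∀ p < (0 : ℝ), IsSelfAdjoint (V p))
    (hVpos : ∀ p < (0 : ℝ), ∀ g : H, 0 ≤ (⟪g, V p g⟫ : ℂ).re)
    (hV : ∀ p < (0 : ℝ),
      LyapunovEq ((p : ℂ) • ContinuousLinearMap.id ℂ H + A) B σ (V p)) :
    ∃ u : ℕ → H, (∀ k, ‖u k‖ = 1) ∧
      ∀ k, Tendsto (fun p => (⟪u k, V p (u k)⟫ : ℂ).re) (𝓝[<] (0 : ℝ)) atTop :=
  statement14_general A B lamstar S hspec hstar hS c hc hB σ hσ V hVsa hVpos hV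
end
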